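/- arXiv:1901.05229 — 2 statements merged into one kernel-verified Lean document; each statement's English description precedes it below -/
import Mathlib

section
/- Let β̂ minimize the SACE objective and suppose column j and column k of X are identical (X_j = X_k) and the initial estimates satisfy β⁰_j = β⁰_k. If β̂_j and β̂_k are both nonzero with the same sign, i.e. sign(β̂_j) = sign(β̂_k) ≠ 0, then β̂_j = β̂_k. -/
open scoped BigOperators

/-- squared Euclidean norm -/
noncomputable def l2sq {n : ℕ} (v : Fin n → ℝ) : ℝ := ∑ i, (v i) ^ 2

/-- ℓ₁ norm -/
noncomputable def l1 {p : ℕ} (v : Fin p → ℝ) : ℝ := ∑ j, |v j|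

/-- standard inner product -/
noncomputable def ip {p : ℕ} (v w : Fin p → ℝ) : ℝ := ∑ j, v j * w j

/-- The SACE objective. -/
noncomputable def sace {n p : ℕ} (y : Fin n → ℝ) (X : Matrix (Fin n) (Fin p) ℝ)
    (lam d : ℝ) (β0 : Fin p → ℝ) (β : Fin p → ℝ) : ℝ :=
  (1 / 2) * l2sq (y - X.mulVec β) + (1 / 2) * l2sq β + lam * l1 β - d * ip β0 β

/-- exact grouping effect. If `β̂` minimizes the SACE objective, columns
`j` and `k` of `X` are identical, the initial estimates agree (`β⁰_j = β⁰_k`), and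
`β̂_j, β̂_k` are both nonzero with the same sign, then `β̂_j = β̂_k`. -/
theorem sace_grouping_exact (n p : ℕ) (y : Fin n → ℝ) (X : Matrix (Fin n) (Fin p) ℝ)
    (lam d : ℝ) (β0 : Fin p → ℝ) (hlam : 0 ≤ lam)
    (βh : Fin p → ℝ) (hmin : ∀ β, sace y X lam d β0 βh ≤ sace y X lam d β0 β)
    (j k : Fin p) (hcol : ∀ i, X i j = X i k) (hβ0 : β0 j = β0 k)
    (hj : βh j ≠ 0) (hk : βh k ≠ 0)
    (hsign : Real.sign (βh j) = Real.sign (βh k)) :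
    βh j = βh k := by
  by_cases hjk : j = k
  · rw [hjk]
  set a := βh j with ha
  set b := βh k with hb
  set m : ℝ := (a + b) / 2 with hm
  set β' : Fin p → ℝ := fun i => if i = j then m else if i = k then m else βh i with hβ'
  have key : ∀ g : Fin p → ℝ, (∀ i, i ≠ j → i ≠ k → g i = 0) → ∑ i, g i = g j + g k := by
    intro g hg
    rw [← Finset.sum_pair hjk]
    exact (Finset.sum_subset (Finset.subset_univ {j, k}) (by
      intro i _ hi
      simp only [Finset.mem_insert, Finset.mem_singleton] at hi
      push_neg at hi
      exact hg i hi.1 hi.2)).symm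
  have hβ'j : β' j = m := by simp [hβ']
  have hβ'k : β' k = m := by simp [hβ', Ne.symm hjk]
  have hβ'o : ∀ i, i ≠ j → i ≠ k → β' i = βh i := by
    intro i h1 h2; simp [hβ', h1, h2]
  have hdiff : ∀ G : Fin p → ℝ → ℝ, (∑ i, G i (β' i)) - (∑ i, G i (βh i)) =
      (G j m - G j a) + (G k m - G k b) := by
    intro G
    rw [← Finset.sum_sub_distrib, key (fun i => G i (β' i) - G i (βh i))
      (fun i h1 h2 => by rw [hβ'o i h1 h2, sub_self]), hβ'j, hβ'k, ← ha, ← hb]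
  have hmul : X.mulVec β' = X.mulVec βh := by
    funext i
    have h0 : (∑ l, X i l * β' l) - (∑ l, X i l * βh l) = 0 := by
      rw [← Finset.sum_sub_distrib, key (fun l => X i l * β' l - X i l * βh l)
        (fun l h1 h2 => by rw [hβ'o l h1 h2, sub_self]), hβ'j, hβ'k, ← ha, ← hb,
        hcol i, hm]
      ring
    simpa [Matrix.mulVec, dotProduct, sub_eq_zero] using h0
  have hl2 : l2sq β' - l2sq βh = -((a - b) ^ 2) / 2 := by
    rw [l2sq, l2sq, hdiff (fun _ t => t ^ 2), hm]; ring
  have hl1 : l1 β' - l1 βh ≤ 0 := by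
    rw [l1, l1, hdiff (fun _ t => |t|), hm]
    have := abs_add_le a b
    rw [abs_div, abs_two]
    linarith [abs_nonneg (a + b)]
  have hip : ip β0 β' - ip β0 βh = 0 := by
    rw [ip, ip, hdiff (fun i t => β0 i * t), hβ0, hm]
    ring
  have hmin' := hmin β'
  rw [sace, sace, hmul] at hmin'
  have hipeq : ip β0 β' = ip β0 βh := by linarith
  rw [hipeq] at hmin'
  have hsq : (a - b) ^ 2 ≤ 0 := by
    have hlamle : lam * l1 β' ≤ lam * l1 βh := by nlinarith
    linarith
  have : a - b = 0 := by nlinarith [sq_nonneg (a - b)]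
  linarith
end

section
/- Let β̂ minimize the SACE objective. For any two coordinates j, k with sign(β̂_j) = sign(β̂_k) ≠ 0, the solution satisfies |β̂_j - β̂_k| ≤ ‖X_j - X_k‖₂·‖y - Xβ̂‖₂ + d·|β⁰_j - β⁰_k|. -/
open scoped BigOperators

lemma sum_update' {p : ℕ} (f : Fin p → ℝ → ℝ) (β : Fin p → ℝ) (j : Fin p) (c : ℝ) :
    ∑ m, f m (Function.update β j c m) = (∑ m, f m (β m)) - f j (β j) + f j c := by
  have h : (fun m => f m (Function.update β j c m))
      = Function.update (fun m => f m (β m)) j (f j c) := by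
    funext m
    by_cases hm : m = j
    · subst hm; simp
    · simp [Function.update_of_ne hm]
  rw [h, Finset.sum_update_of_mem (Finset.mem_univ j)]
  rw [Finset.sum_eq_sum_sdiff_singleton_add (Finset.mem_univ j) (fun m => f m (β m))]
  ring

lemma abs_add_small (x t : ℝ) (hx : x ≠ 0) (ht : |t| < |x|) :
    |x + t| = |x| + Real.sign x * t := by
  rcases lt_or_gt_of_ne hx with h | h
  · have h1 : t < -x := by have := (abs_lt.mp ht).2; rwa [abs_of_neg h] at this
    rw [abs_of_neg (by linarith : x + t < 0), abs_of_neg h, Real.sign_of_neg h]; ring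
  · have h1 : -x < t := by have h2 := (abs_lt.mp ht).1; rw [abs_of_pos h] at h2; linarith
    rw [abs_of_pos (by linarith : 0 < x + t), abs_of_pos h, Real.sign_of_pos h]; ring

lemma zero_of_quad (A C δ : ℝ) (hδ : 0 < δ) (hC : 0 ≤ C)
    (h : ∀ t : ℝ, |t| < δ → 0 ≤ t * A + t ^ 2 * C) : A = 0 := by
  by_contra hA
  have hA2 : 0 < |A| := abs_pos.mpr hA
  set η : ℝ := min (δ / (2 * |A|)) (1 / (2 * (C + 1))) with hη
  have hη0 : 0 < η := lt_min (by positivity) (by positivity)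
  have hηC : η * C < 1 := by
    have h1 : η ≤ 1 / (2 * (C + 1)) := min_le_right _ _
    have h2 : (C + 1) * η ≤ (C + 1) * (1 / (2 * (C + 1))) :=
      mul_le_mul_of_nonneg_left h1 (by linarith)
    have h3 : (C + 1) * (1 / (2 * (C + 1))) = 1 / 2 := by field_simp
    nlinarith
  have ht : |(-A * η)| < δ := by
    have : η ≤ δ / (2 * |A|) := min_le_left _ _
    rw [abs_mul, abs_neg, abs_of_pos hη0]
    calc |A| * η ≤ |A| * (δ / (2 * |A|)) := by nlinarith
      _ = δ / 2 := by field_simp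
      _ < δ := by linarith
  have := h (-A * η) ht
  have hA2' : 0 < A ^ 2 := by positivity
  have key : -A * η * A + (-A * η) ^ 2 * C = A ^ 2 * η * (η * C - 1) := by ring
  have neg : A ^ 2 * η * (η * C - 1) < 0 :=
    mul_neg_of_pos_of_neg (mul_pos hA2' hη0) (by linarith)
  linarith

lemma sace_stationary {n p : ℕ} (y : Fin n → ℝ) (X : Matrix (Fin n) (Fin p) ℝ)
    (lam d : ℝ) (β0 βh : Fin p → ℝ)
    (hmin : ∀ β, sace y X lam d β0 βh ≤ sace y X lam d β0 β)
    (j : Fin p) (hj : βh j ≠ 0) :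
    ∑ i, X i j * (y i - X.mulVec βh i)
      = βh j + lam * Real.sign (βh j) - d * β0 j := by
  set r : Fin n → ℝ := fun i => y i - X.mulVec βh i with hr
  set S1 : ℝ := ∑ i, X i j * r i with hS1
  set S2 : ℝ := ∑ i, (X i j) ^ 2 with hS2
  set s : ℝ := Real.sign (βh j) with hs
  set A : ℝ := -S1 + βh j + lam * s - d * β0 j with hA
  set C : ℝ := (S2 + 1) / 2 with hC
  have hCnn : 0 ≤ C := by
    have : 0 ≤ S2 := Finset.sum_nonneg fun i _ => sq_nonneg _
    rw [hC]; linarith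
  have key : A = 0 := by
    apply zero_of_quad A C (|βh j|) (abs_pos.mpr hj) hCnn
    intro t ht
    set β' : Fin p → ℝ := Function.update βh j (βh j + t) with hβ'
    have hmul : ∀ i, X.mulVec β' i = X.mulVec βh i + X i j * t := by
      intro i
      simp only [Matrix.mulVec, dotProduct, hβ']
      rw [sum_update' (fun m x => X i m * x) βh j (βh j + t)]
      ring
    have e1 : l2sq (y - X.mulVec β') = l2sq (y - X.mulVec βh) - 2 * t * S1 + t ^ 2 * S2 := by
      simp only [l2sq, Pi.sub_apply, hS1, hS2]
      rw [Finset.mul_sum, Finset.mul_sum, ← Finset.sum_sub_distrib, ← Finset.sum_add_distrib]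
      apply Finset.sum_congr rfl
      intro i _
      rw [hmul i]
      simp only [hr]
      ring
    have e2 : l2sq β' = l2sq βh - (βh j) ^ 2 + (βh j + t) ^ 2 := by
      simp only [l2sq, hβ']
      exact sum_update' (fun _ x => x ^ 2) βh j (βh j + t)
    have e3 : l1 β' = l1 βh - |βh j| + |βh j + t| := by
      simp only [l1, hβ']
      exact sum_update' (fun _ x => |x|) βh j (βh j + t)
    have e4 : ip β0 β' = ip β0 βh + β0 j * t := by
      simp only [ip, hβ']
      rw [sum_update' (fun m x => β0 m * x) βh j (βh j + t)]
      ring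
    have e5 : |βh j + t| = |βh j| + s * t := abs_add_small (βh j) t hj ht
    have hobj := hmin β'
    have he : sace y X lam d β0 β'
        = sace y X lam d β0 βh + (t * A + t ^ 2 * C) := by
      simp only [sace, e1, e2, e3, e4, e5, hA, hC]
      ring
    rw [he] at hobj
    linarith
  have : -S1 + βh j + lam * s - d * β0 j = 0 := by rw [← hA]; exact key
  have : S1 = βh j + lam * s - d * β0 j := by linarith
  simpa [hS1, hr, hs] using this

/-- grouping-effect bound. If `β̂` minimizes the SACE objective and
`β̂_j, β̂_k` are nonzero with the same sign, then
`|β̂_j - β̂_k| ≤ ‖X_j - X_k‖₂ ‖y - Xβ̂‖₂ + d |β⁰_j - β⁰_k|`. -/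
theorem sace_grouping_bound (n p : ℕ) (y : Fin n → ℝ) (X : Matrix (Fin n) (Fin p) ℝ)
    (lam d : ℝ) (β0 : Fin p → ℝ) (hlam : 0 ≤ lam) (hd : 0 ≤ d)
    (βh : Fin p → ℝ) (hmin : ∀ β, sace y X lam d β0 βh ≤ sace y X lam d β0 β)
    (j k : Fin p) (hj : βh j ≠ 0) (hk : βh k ≠ 0)
    (hsign : Real.sign (βh j) = Real.sign (βh k)) :
    |βh j - βh k| ≤
      Real.sqrt (∑ i, (X i j - X i k) ^ 2) * Real.sqrt (l2sq (y - X.mulVec βh)) +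
        d * |β0 j - β0 k| := by
  set r : Fin n → ℝ := fun i => y i - X.mulVec βh i with hr
  have hjst := sace_stationary y X lam d β0 βh hmin j hj
  have hkst := sace_stationary y X lam d β0 βh hmin k hk
  set S : ℝ := ∑ i, (X i j - X i k) * r i with hS
  have hdiff : βh j - βh k = S + d * (β0 j - β0 k) := by
    have hsplit : S = (∑ i, X i j * r i) - ∑ i, X i k * r i := by
      rw [hS, ← Finset.sum_sub_distrib]
      exact Finset.sum_congr rfl fun i _ => by ring
    rw [hsplit, hjst, hkst, hsign]; ring
  have hCS : |S| ≤ Real.sqrt (∑ i, (X i j - X i k) ^ 2) * Real.sqrt (l2sq r) := by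
    have h1 : S ^ 2 ≤ (∑ i, (X i j - X i k) ^ 2) * ∑ i, (r i) ^ 2 :=
      Finset.sum_mul_sq_le_sq_mul_sq Finset.univ _ _
    have h2 : |S| = Real.sqrt (S ^ 2) := by rw [Real.sqrt_sq_eq_abs]
    rw [h2, ← Real.sqrt_mul (Finset.sum_nonneg fun i _ => sq_nonneg _)]
    exact Real.sqrt_le_sqrt (by simpa [l2sq] using h1)
  have hl2 : l2sq (y - X.mulVec βh) = l2sq r := by
    simp [l2sq, hr]
  rw [hdiff, hl2]
  calc |S + d * (β0 j - β0 k)| ≤ |S| + |d * (β0 j - β0 k)| := abs_add_le _ _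
    _ = |S| + d * |β0 j - β0 k| := by rw [abs_mul, abs_of_nonneg hd]
    _ ≤ _ := by linarith
end
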